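/- Let K be a finite field of characteristic different from 2 and u a nonzero element of K with u ≠ 1 and u ≠ −1. (i) If u² + 4 is not a square in K, then the u-trinomial minimal solution over K is irreducible. (ii) If moreover u or −u is a generator of the cyclic group K^*, then the u-trinomial minimal solution over K is irreducible if and only if u² + 4 is not a square in K. -/

import Mathlib

/-!
A reduction `c ∼ a ⊕ b` of a λ-quiddity amounts to a cyclic block `g` of `c` with
`1 ≤ |g| ≤ |c| - 3` whose matrix has top-left entry `± 1` (the middle of `b`); conversely such
a block can be completed to a λ-quiddity `b` because `det = 1`. For `c = (u, v, v)^k` with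
`v = u⁻¹`, the blocks are `v^a (u, v, v)^m (u, v, v)[:r]`, and their corner entries are `0`,
`± (-u)^j` or `± (-v)^j` with `0 < j < k`, or `v² (-v)^m - (-u)^m` for `(a, r) = (2, 0)`.
Minimality of `k` excludes the powers, and the last one being `± 1` makes
`u² + 4 = (u (-u)^m + v (-v)^m)²` a square. Conversely, if `u` or `-u` generates `K*`, a root
`t` of `X² + uX - 1` is `± uⁿ` with `0 < n < k`, and the block `(v, v) ++ (u, v, v)^(n-1)` has
corner entry `± 1`.
-/

namespace Quiddity

variable {A : Type*} [CommRing A]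

/-- `mMat [a₁, …, aₙ]` is the matrix product `[[aₙ,-1],[1,0]] ⋯ [[a₁,-1],[1,0]]`. -/
def mMat : List A → Matrix (Fin 2) (Fin 2) A
  | [] => 1
  | a :: t => mMat t * !![a, -1; 1, 0]

/-- Continuant: `cont [] = K₀ = 1`, `cont [a] = K₁(a) = a`, and the continuant recursion. -/
def cont : List A → A
  | [] => 1
  | [a] => a
  | a :: b :: t => a * cont (b :: t) - cont t

/-- A λ-quiddity is a tuple with `Mₙ(a₁,…,aₙ) = ± Id`. -/
def IsQuiddity (l : List A) : Prop := mMat l = 1 ∨ mMat l = -1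

/-- The sum `⊕` of two tuples (meaningful for tuples of length ≥ 2):
`(a₁,…,aₘ) ⊕ (b₁,…,b_l) = (a₁+b_l, a₂,…,a_{m−1}, aₘ+b₁, b₂,…,b_{l−1})`. -/
def oplus (la lb : List A) : List A :=
  (la.headD 0 + lb.getLastD 0) ::
    (la.tail.dropLast ++ (la.getLastD 0 + lb.headD 0) :: lb.tail.dropLast)

/-- Two tuples are equivalent if one is a cyclic permutation of the other or of its
reversal. -/
def TupleEquiv (l l' : List A) : Prop :=
  List.IsRotated l l' ∨ List.IsRotated l.reverse l'

/-- A λ-quiddity `c` is reducible if `c ∼ a ⊕ b` with `b` a λ-quiddity and both of size ≥ 3. -/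
def QuiddityReducible (c : List A) : Prop :=
  ∃ a b : List A, 3 ≤ a.length ∧ 3 ≤ b.length ∧ IsQuiddity b ∧ TupleEquiv c (oplus a b)

/-- `(a, b, a, b, …, a, b)` with `k` repetitions of the pair `(a, b)` (size `2k`). -/
def dynList : ℕ → A → A → List A
  | 0, _, _ => []
  | k + 1, a, b => a :: b :: dynList k a b

/-- `(u, v, v, u, v, v, …, u, v, v)` with `k` repetitions of the block `(u, v, v)`
(size `3k`). -/
def triList : ℕ → A → A → List A
  | 0, _, _ => []
  | k + 1, a, b => a :: b :: b :: triList k a b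

end Quiddity

open Quiddity

lemma List.IsRotated.infix_append_self {α : Type*} {l l' : List α} (h : l ~r l') :
    l' <:+: l ++ l := by
  obtain ⟨n, rfl⟩ := h
  rw [List.rotate_eq_drop_append_take_mod]
  refine ⟨l.take (n % l.length), l.drop (n % l.length), ?_⟩
  conv_rhs => rw [← List.take_append_drop (n % l.length) l]
  simp only [List.append_assoc]

lemma List.exists_eq_cons_append_singleton {α : Type*} {l : List α} (hl : 3 ≤ l.length) :
    ∃ x g y, g ≠ [] ∧ l = x :: (g ++ [y]) := by
  obtain ⟨x, t, rfl⟩ := List.exists_cons_of_ne_nil (l := l) (by rintro rfl; simp at hl)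
  rcases List.eq_nil_or_concat t with rfl | ⟨g, y, rfl⟩
  · simp at hl
  · refine ⟨x, g, y, ?_, by simp⟩
    rintro rfl
    simp at hl

lemma exists_lt_pow_eq_or_eq_neg {M : Type*} [Monoid M] [HasDistribNeg M] {u : M} {k : ℕ}
    (hk : 0 < k) (huk : u ^ k = 1 ∨ u ^ k = -1) (j : ℕ) :
    ∃ n < k, u ^ j = u ^ n ∨ u ^ j = -u ^ n := by
  have hj : u ^ j = (u ^ k) ^ (j / k) * u ^ (j % k) := by
    rw [← pow_mul, ← pow_add, Nat.div_add_mod]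
  refine ⟨j % k, Nat.mod_lt j hk, ?_⟩
  rw [hj]
  rcases huk with h | h
  · simp [h]
  · rcases neg_one_pow_eq_or M (j / k) with h' | h' <;> simp [h, h']

namespace Quiddity

section Lists

variable {α : Type*}

@[simp] lemma length_triList (m : ℕ) (a b : α) : (triList m a b).length = 3 * m := by
  induction m with
  | zero => rfl
  | succ m ih => simp only [triList, List.length_cons, ih]; ring

lemma triList_add (m n : ℕ) (a b : α) :
    triList (m + n) a b = triList m a b ++ triList n a b := by
  induction m with
  | zero => simp [triList]
  | succ m ih => simp [Nat.succ_add, triList, ih]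

lemma take_triList (u v : α) : ∀ {M j : ℕ}, j ≤ 3 * M →
    (triList M u v).take j = triList (j / 3) u v ++ [u, v, v].take (j % 3)
  | 0, 0, _ => rfl
  | 0, _ + 1, hj => by omega
  | M + 1, j, hj => by
    rcases lt_or_ge j 3 with hj3 | hj3
    · interval_cases j <;> rfl
    · obtain ⟨i, rfl⟩ : ∃ i, j = i + 3 := ⟨j - 3, by omega⟩
      rw [show (i + 3) / 3 = i / 3 + 1 by omega, show (i + 3) % 3 = i % 3 by omega]
      simp [triList, take_triList u v (M := M) (j := i) (by omega)]

lemma drop_triList (u v : α) : ∀ M s : ℕ,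
    ∃ a N, a ≤ 2 ∧ (triList M u v).drop s = List.replicate a v ++ triList N u v
  | 0, _ => ⟨0, 0, Nat.zero_le 2, by simp [triList]⟩
  | M + 1, 0 => ⟨0, M + 1, Nat.zero_le 2, rfl⟩
  | M + 1, 1 => ⟨2, M, le_rfl, rfl⟩
  | M + 1, 2 => ⟨1, M, one_le_two, rfl⟩
  | M + 1, s + 3 => drop_triList u v M s

lemma eq_of_infix_triList {u v : α} {g : List α} {N : ℕ} (h : g <:+: triList N u v) :
    ∃ a m r, a ≤ 2 ∧ r ≤ 2 ∧ g = List.replicate a v ++ (triList m u v ++ [u, v, v].take r) := by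
  obtain ⟨s, t, hst⟩ := h
  obtain ⟨a, M, ha, hdrop⟩ := drop_triList u v N s.length
  have hpre : g <+: List.replicate a v ++ triList M u v := by
    rw [← hdrop, ← hst, List.append_assoc, List.drop_left]
    exact List.prefix_append _ _
  have hg := List.prefix_iff_eq_take.mp hpre
  have hlen := hpre.length_le
  simp only [List.length_append, List.length_replicate, length_triList] at hlen
  rw [List.take_append, List.take_replicate, List.length_replicate] at hg
  rcases le_or_gt g.length a with hga | hga
  · refine ⟨g.length, 0, 0, by omega, by omega, ?_⟩
    rw [hg, Nat.sub_eq_zero_of_le hga, min_eq_left hga]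
    simp [triList]
  · rw [min_eq_right hga.le, take_triList u v (by omega)] at hg
    exact ⟨a, (g.length - a) / 3, (g.length - a) % 3, ha, by omega, hg⟩

end Lists

section CommRing

variable {A : Type*} [CommRing A]

lemma mMat_append (l₁ l₂ : List A) : mMat (l₁ ++ l₂) = mMat l₂ * mMat l₁ := by
  induction l₁ with
  | nil => simp [mMat]
  | cons a t ih => simp [mMat, ih, Matrix.mul_assoc]

lemma det_mMat (l : List A) : (mMat l).det = 1 := by
  induction l with
  | nil => simp [mMat]
  | cons a t ih => simp [mMat, Matrix.det_mul, ih, Matrix.det_fin_two_of]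

/-- Each factor satisfies `!![a, -1; 1, 0]ᵀ = J * !![a, -1; 1, 0] * J` with `J = diag(1, -1)`,
and `J * J = 1`. -/
lemma mMat_reverse (l : List A) :
    mMat l.reverse = !![1, 0; 0, -1] * (mMat l).transpose * !![1, 0; 0, -1] := by
  set J : Matrix (Fin 2) (Fin 2) A := !![1, 0; 0, -1]
  have hJJ : J * J = 1 := by
    rw [Matrix.mul_fin_two, Matrix.one_fin_two]; simp
  have hstep (a : A) : (!![a, -1; 1, 0] : Matrix (Fin 2) (Fin 2) A).transpose =
      J * !![a, -1; 1, 0] * J := by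
    rw [Matrix.mul_fin_two, Matrix.mul_fin_two]; ext i j; fin_cases i <;> fin_cases j <;> simp
  induction l with
  | nil => simp [mMat, hJJ]
  | cons a t ih =>
    rw [List.reverse_cons, mMat_append, ih]
    simp only [mMat, Matrix.one_mul, Matrix.transpose_mul, hstep, ← Matrix.mul_assoc, hJJ]

lemma mMat_reverse_zero_zero (l : List A) : mMat l.reverse 0 0 = mMat l 0 0 := by
  rw [mMat_reverse]
  simp [Matrix.mul_apply, Fin.sum_univ_two, Matrix.vecMul, dotProduct]

lemma mMat_zero_zero_of_isQuiddity {x y : A} {l : List A} (h : IsQuiddity (x :: (l ++ [y]))) :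
    mMat l 0 0 = 1 ∨ mMat l 0 0 = -1 := by
  have h11 : mMat (x :: (l ++ [y])) 1 1 = -mMat l 0 0 := by
    rw [mMat, mMat_append, Matrix.eta_fin_two (mMat l)]
    simp [mMat]
  rcases h with h | h <;> rw [h] at h11 <;>
    simp only [Matrix.one_apply_eq, Matrix.neg_apply] at h11
  · exact Or.inr (by linear_combination h11)
  · exact Or.inl (by linear_combination h11)

/-- The product is `-(mMat l 0 0)` times the identity, because `det (mMat l) = 1`. -/
lemma isQuiddity_of_mMat_zero_zero {l : List A} (h : mMat l 0 0 = 1 ∨ mMat l 0 0 = -1) :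
    IsQuiddity ((-(mMat l 0 0 * mMat l 0 1)) :: (l ++ [mMat l 0 0 * mMat l 1 0])) := by
  have hdet := det_mMat l
  rw [Matrix.det_fin_two] at hdet
  rw [IsQuiddity, mMat, mMat_append, Matrix.eta_fin_two (mMat l)]
  simp only [mMat, Matrix.one_mul, Matrix.mul_fin_two]
  rcases h with h | h <;> rw [h] at hdet ⊢
  · right; ext i j; fin_cases i <;> fin_cases j <;> simp; linear_combination -hdet
  · left; ext i j; fin_cases i <;> fin_cases j <;> simp; linear_combination hdet

/-- The block `g` is the middle of `b` in a reduction `c ∼ a ⊕ b`, read forwards or backwards. -/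
lemma QuiddityReducible.exists_infix {c : List A} (h : QuiddityReducible c) :
    ∃ g, g <:+: c ++ c ∧ g ≠ [] ∧ g.length + 3 ≤ c.length ∧
      (mMat g 0 0 = 1 ∨ mMat g 0 0 = -1) := by
  obtain ⟨a, b, ha, hb, hq, hc⟩ := h
  obtain ⟨x, g, y, hg, rfl⟩ := List.exists_eq_cons_append_singleton hb
  have hsuf : g <:+ oplus a (x :: (g ++ [y])) :=
    ⟨(a.headD 0 + y) :: (a.tail.dropLast ++ [a.getLastD 0 + x]),
      by simp [oplus, List.getLast?_append, List.getLast?_cons]⟩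
  have hlen : c.length = a.length + g.length := by
    have : c.length = (oplus a (x :: (g ++ [y]))).length := by
      rcases hc with hc | hc
      · exact hc.perm.length_eq
      · simpa using hc.perm.length_eq
    simp only [this, oplus, List.length_cons, List.length_append, List.length_dropLast,
      List.length_tail, List.length_nil]
    omega
  have hq := mMat_zero_zero_of_isQuiddity hq
  rcases hc with hc | hc
  · exact ⟨g, hsuf.isInfix.trans hc.infix_append_self, hg, by omega, hq⟩
  · refine ⟨g.reverse, ?_, by simpa using hg, by simp; omega, by rwa [mMat_reverse_zero_zero]⟩
    rw [← List.reverse_infix, List.reverse_reverse, List.reverse_append]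
    exact hsuf.isInfix.trans hc.infix_append_self

lemma quiddityReducible_of_mMat_zero_zero {x y : A} {l g : List A} (hl : l ≠ []) (hg : g ≠ [])
    (h : mMat g 0 0 = 1 ∨ mMat g 0 0 = -1) : QuiddityReducible (x :: (l ++ y :: g)) := by
  have hl := List.length_pos_iff.mpr hl
  have hg := List.length_pos_iff.mpr hg
  refine ⟨(x - mMat g 0 0 * mMat g 1 0) :: (l ++ [y + mMat g 0 0 * mMat g 0 1]), _ :: (g ++ [_]),
    by simp; omega, by simp; omega, isQuiddity_of_mMat_zero_zero h, Or.inl ⟨0, ?_⟩⟩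
  simp [oplus, List.getLast?_append, List.getLast?_cons]

lemma mMat_triList {u v : A} (huv : u * v = 1) (m : ℕ) :
    mMat (triList m u v) = !![(-u) ^ m, v * ((-v) ^ m - (-u) ^ m); 0, (-v) ^ m] := by
  induction m with
  | zero => simp [triList, mMat, Matrix.one_fin_two]
  | succ m ih =>
    simp only [triList, mMat, ih, Matrix.mul_fin_two]
    ext i j; fin_cases i <;> fin_cases j <;> simp [pow_succ] <;> grind

/-- With `α = (-u)^m` and `β = (-v)^m`, the corner entry of the block
`v^a ++ (u, v, v)^m ++ (u, v, v).take r` is, in rows `a = 0, 1, 2` and columns `r = 0, 1, 2`: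
`α, uα, 0; vβ, 0, -vβ; v²β - α, -uα, -v²β`. -/
lemma isSquare_or_exists_pow_eq_one_of_infix_triList {u v : A} (huv : u * v = 1) {g : List A}
    {N : ℕ} (hg : g <:+: triList N u v) (hne : g ≠ [])
    (hcorner : mMat g 0 0 = 1 ∨ mMat g 0 0 = -1) :
    IsSquare (u ^ 2 + 4) ∨ ∃ j, 0 < j ∧ 3 * j ≤ g.length + 2 ∧ (u ^ 2) ^ j = 1 := by
  have hd : mMat g 0 0 ^ 2 = 1 := by rcases hcorner with h | h <;> simp [h]
  have hlen := List.length_pos_iff.mpr hne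
  obtain ⟨a, m, r, ha, hr, rfl⟩ := eq_of_infix_triList hg
  clear hg hne hcorner
  rw [mMat_append, mMat_append, mMat_triList huv] at hd
  have hαβ : (-u) ^ m * (-v) ^ m = 1 := by rw [← mul_pow]; simp [huv]
  have hα : (u ^ 2) ^ m = ((-u) ^ m) ^ 2 := by rw [pow_right_comm (-u), neg_sq]
  generalize (-u) ^ m = α, (-v) ^ m = β at hd hαβ hα
  simp only [List.length_append, List.length_replicate, length_triList, List.length_take,
    List.length_cons, List.length_nil] at hlen ⊢
  interval_cases a <;> interval_cases r <;>
    simp only [List.replicate, List.take, mMat, Matrix.one_mul, Matrix.mul_one, Matrix.mul_fin_two,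
      Matrix.of_apply, Matrix.cons_val', Matrix.cons_val_zero, Matrix.cons_val_fin_one] at hd
  · exact Or.inr ⟨m, by omega, by omega, by grind⟩
  · exact Or.inr ⟨m + 1, by omega, by omega, by grind⟩
  · exact Or.inr ⟨m + 1, by omega, by omega, by grind⟩
  · exact Or.inr ⟨m + 1, by omega, by omega, by grind⟩
  · exact Or.inr ⟨m + 1, by omega, by omega, by grind⟩
  · exact Or.inr ⟨m + 1, by omega, by omega, by grind⟩
  · exact Or.inl ⟨u * α + v * β, by grind⟩
  · exact Or.inr ⟨m + 1, by omega, by omega, by grind⟩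
  · exact Or.inr ⟨m + 2, by omega, by omega, by grind⟩

lemma isQuiddity_triList_iff [NoZeroDivisors A] {u v : A} (huv : u * v = 1) (k : ℕ) :
    IsQuiddity (triList k u v) ↔ (u ^ 2) ^ k = 1 := by
  have hαβ : (-u) ^ k * (-v) ^ k = 1 := by rw [← mul_pow]; simp [huv]
  rw [IsQuiddity, mMat_triList huv, ← neg_sq u, pow_right_comm, sq_eq_one_iff]
  generalize (-u) ^ k = α, (-v) ^ k = β at hαβ
  constructor
  · rintro (h | h)
    · exact Or.inl (by simpa using congrFun (congrFun h 0) 0)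
    · exact Or.inr (by simpa using congrFun (congrFun h 0) 0)
  · rintro (rfl | rfl)
    · left; rw [one_mul] at hαβ; simp [hαβ, Matrix.one_fin_two]
    · right
      rw [show β = -1 by linear_combination -hαβ]
      ext i j; fin_cases i <;> fin_cases j <;> simp

theorem not_quiddityReducible_triList {u v : A} (huv : u * v = 1) {k : ℕ}
    (hmin : ∀ j, 0 < j → j < k → (u ^ 2) ^ j ≠ 1) (hsq : ¬ IsSquare (u ^ 2 + 4)) :
    ¬ QuiddityReducible (triList k u v) := by
  intro h
  obtain ⟨g, hg, hne, hlen, hd⟩ := h.exists_infix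
  rw [← triList_add] at hg
  rcases isSquare_or_exists_pow_eq_one_of_infix_triList huv hg hne hd with h | ⟨j, hj, hjg, hj1⟩
  · exact hsq h
  · simp only [length_triList] at hlen
    exact hmin j hj (by omega) hj1

/-- The block `(v, v) ++ (u, v, v)^(n-1)` has corner entry `(-1)^(n-1) v (v^n - u^n) = ± 1`. -/
theorem quiddityReducible_triList {u v : A} (huv : u * v = 1) {n k : ℕ} (hn : 0 < n) (hnk : n < k)
    (h : u ^ n - v ^ n = u ∨ u ^ n - v ^ n = -u) : QuiddityReducible (triList k u v) := by
  obtain ⟨m, rfl⟩ : ∃ m, n = m + 1 := ⟨n - 1, by omega⟩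
  obtain ⟨l, rfl⟩ : ∃ l, k = (l + 1) + (m + 1) := ⟨k - m - 2, by omega⟩
  rw [triList_add]
  refine quiddityReducible_of_mMat_zero_zero (l := v :: v :: triList l u v)
    (g := v :: v :: triList m u v) (by simp) (by simp) ?_
  simp only [mMat, mMat_triList huv, neg_pow u, neg_pow v, Matrix.mul_fin_two, Matrix.of_apply,
    Matrix.cons_val', Matrix.cons_val_zero, Matrix.cons_val_fin_one]
  rcases neg_one_pow_eq_or A m with hs | hs <;> rcases h with h | h <;> grind

end CommRing

section Field

variable {K : Type*} [Field K]

lemma exists_inv_sub_eq_of_isSquare [NeZero (2 : K)] {u : K} (h : IsSquare (u ^ 2 + 4)) :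
    ∃ t : K, t ≠ 0 ∧ t⁻¹ - t = u := by
  obtain ⟨s, hs⟩ := h
  obtain ⟨t, ht⟩ := exists_quadratic_eq_zero (a := 1) (b := u) (c := -1) one_ne_zero
    ⟨s, by rw [discrim, ← hs]; ring⟩
  have ht0 : t ≠ 0 := by rintro rfl; simp at ht
  exact ⟨t, ht0, by field_simp; linear_combination -ht⟩

lemma exists_pow_eq_or_eq_neg_of_forall_mem_zpowers [Finite K] {u : K} {w : Kˣ}
    (hw : (w : K) = u ∨ (w : K) = -u) (hgen : ∀ x : Kˣ, x ∈ Subgroup.zpowers w) {x : K}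
    (hx : x ≠ 0) : ∃ j : ℕ, x = u ^ j ∨ x = -u ^ j := by
  obtain ⟨j, hj⟩ := mem_powers_iff_mem_zpowers.mpr (hgen (Units.mk0 x hx))
  have hxj : x = (w : K) ^ j := by simpa using congrArg Units.val hj.symm
  refine ⟨j, ?_⟩
  rcases hw with hw | hw <;> rw [hxj, hw]
  · exact Or.inl rfl
  · rw [neg_pow]
    rcases neg_one_pow_eq_or K j with h | h <;> simp [h]

/-- A root `t` of `X² + uX - 1` is `± uⁿ` with `n < k`; then `uⁿ - u⁻ⁿ = ∓ (t - t⁻¹) = ± u`. -/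
theorem exists_pow_sub_inv_pow [Finite K] [NeZero (2 : K)] {u : K} (hu : u ≠ 0) {w : Kˣ}
    (hw : (w : K) = u ∨ (w : K) = -u) (hgen : ∀ x : Kˣ, x ∈ Subgroup.zpowers w) {k : ℕ}
    (hk : 0 < k) (huk : (u ^ 2) ^ k = 1) (hsq : IsSquare (u ^ 2 + 4)) :
    ∃ n, 0 < n ∧ n < k ∧ (u ^ n - u⁻¹ ^ n = u ∨ u ^ n - u⁻¹ ^ n = -u) := by
  obtain ⟨t, ht0, ht⟩ := exists_inv_sub_eq_of_isSquare hsq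
  obtain ⟨j, hj⟩ := exists_pow_eq_or_eq_neg_of_forall_mem_zpowers hw hgen ht0
  have huk : u ^ k = 1 ∨ u ^ k = -1 := by rwa [← sq_eq_one_iff, pow_right_comm]
  obtain ⟨n, hnk, hn⟩ := exists_lt_pow_eq_or_eq_neg hk huk j
  have htn : t = u ^ n ∨ t = -u ^ n := by
    rcases hj with rfl | rfl
    · exact hn
    · rcases hn with h | h <;> simp [h]
  refine ⟨n, Nat.pos_of_ne_zero ?_, hnk, ?_⟩
  · rintro rfl
    rw [pow_zero] at htn
    rcases htn with rfl | rfl <;> norm_num at ht <;> exact hu ht.symm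
  · rw [inv_pow]
    rcases htn with rfl | rfl
    · right; linear_combination -ht
    · left; rw [inv_neg] at ht; linear_combination ht

end Field

end Quiddity

theorem stmt15_general (K : Type*) [Field K] [Fintype K] (hchar : ringChar K ≠ 2)
    (u : K) (hu0 : u ≠ 0)
    (k : ℕ) (hk : 0 < k)
    (hq : IsQuiddity (triList k u u⁻¹))
    (hmin : ∀ j, 0 < j → IsQuiddity (triList j u u⁻¹) → k ≤ j) :
    (¬ IsSquare (u ^ 2 + 4) → ¬ QuiddityReducible (triList k u u⁻¹)) ∧
    ((∃ w : Kˣ, ((w : K) = u ∨ (w : K) = -u) ∧ ∀ v : Kˣ, v ∈ Subgroup.zpowers w) →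
      (¬ QuiddityReducible (triList k u u⁻¹) ↔ ¬ IsSquare (u ^ 2 + 4))) := by
  have huv : u * u⁻¹ = 1 := mul_inv_cancel₀ hu0
  have hirr : ¬ IsSquare (u ^ 2 + 4) → ¬ QuiddityReducible (triList k u u⁻¹) :=
    not_quiddityReducible_triList huv fun j hj hjk h ↦
      (hjk.trans_le (hmin j hj ((isQuiddity_triList_iff huv j).2 h))).false
  refine ⟨hirr, fun ⟨w, hw, hgen⟩ ↦ ⟨fun hred hsq ↦ hred ?_, hirr⟩⟩
  have : NeZero (2 : K) := ⟨Ring.two_ne_zero hchar⟩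
  obtain ⟨n, hn, hnk, h⟩ :=
    exists_pow_sub_inv_pow hu0 hw hgen hk ((isQuiddity_triList_iff huv k).1 hq) hsq
  exact quiddityReducible_triList huv hn hnk h

/-- over a finite field of characteristic ≠ 2, if `u² + 4` is not a square
then the `u`-trinomial minimal solution is irreducible; and if `u` or `−u` generates `K*`,
this is an equivalence. -/
theorem stmt15 (K : Type*) [Field K] [Fintype K] (hchar : ringChar K ≠ 2)
    (u : K) (hu0 : u ≠ 0) (hu1 : u ≠ 1) (hu2 : u ≠ -1)
    (k : ℕ) (hk : 0 < k)
    (hq : IsQuiddity (triList k u u⁻¹))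
    (hmin : ∀ j, 0 < j → IsQuiddity (triList j u u⁻¹) → k ≤ j) :
    (¬ IsSquare (u ^ 2 + 4) → ¬ QuiddityReducible (triList k u u⁻¹)) ∧
    ((∃ w : Kˣ, ((w : K) = u ∨ (w : K) = -u) ∧ ∀ v : Kˣ, v ∈ Subgroup.zpowers w) →
      (¬ QuiddityReducible (triList k u u⁻¹) ↔ ¬ IsSquare (u ^ 2 + 4))) :=
  stmt15_general K hchar u hu0 k hk hq hmin
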